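/- Let P be the triadic Cantor distribution with ratio r ∈ (0, 1/3), and let κ = {(r+1)/(6−2r), (5−3r)/(6−2r)} be the conditional means of P on [0,1/2] and [1/2,1]. Then the distortion error V(P; κ) = ∫ min_{a∈κ}(x−a)² dP(x) equals (−7r³ + 13r² − 9r + 3)/(6(r−3)²(r+1)). -/

import Mathlib

open MeasureTheory
open scoped ENNReal

/-- The similarity mappings `S_j(x) = r x + ((j-1)/2)(1-r)`, indexed by `j : Fin 3`
(so `j = 0, 1, 2` corresponds to `j = 1, 2, 3` in the paper). -/
noncomputable def Smap (r : ℝ) (j : Fin 3) (x : ℝ) : ℝ := r * x + (j : ℝ) / 2 * (1 - r)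

/-- For a word `σ = σ₁ ⋯ σ_k` over the alphabet, the composition `S_σ = S_{σ₁} ∘ ⋯ ∘ S_{σ_k}`. -/
noncomputable def Sword (r : ℝ) {k : ℕ} (σ : Fin k → Fin 3) : ℝ → ℝ :=
  fun x => (List.ofFn σ).foldr (fun j y => Smap r j y) x

/-- The cylinder interval `J_σ = S_σ([0,1])`. -/
noncomputable def cylJ (r : ℝ) {k : ℕ} (σ : Fin k → Fin 3) : Set ℝ :=
  Set.image (Sword r σ) (Set.Icc (0 : ℝ) 1)

/-- The conditional mean `E(X | X ∈ A)` of a random variable with distribution `P`. -/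
noncomputable def condMean (P : Measure ℝ) (A : Set ℝ) : ℝ :=
  (P A).toReal⁻¹ * ∫ x in A, x ∂P

/-!
Invariance of `P` turns `∫ f dP` into the average of the `∫ f ∘ Sⱼ dP`. For `f = x`, `x²` and
`|x - 1/2|` this yields linear equations for the moments: `∫ x = 1/2`,
`∫ x² = (r + 5)/(12(1 + r))` and, since `S₁` contracts about `1/2` while `S₀` and `S₂` send
`[0, 1]` to opposite sides of `1/2`, `∫ |x - 1/2| = (1 - r)/(3 - r)`. For `a ≤ b` with
`a + b = 1` one has `min ((x - a)², (x - b)²) = x² - x + (a² + b²)/2 - (b - a)|x - 1/2|`, so the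
distortion is a combination of these three moments. All integrals exist because `P` is carried
by `[0, 1]`.
-/

open Set Filter Topology

lemma measure_lt_eq_zero_of_le_measure_div_lt {α : Type*} [MeasurableSpace α] {μ : Measure α}
    [IsFiniteMeasure μ] {d : α → ℝ} (hd : Measurable d) {r : ℝ} (hr0 : 0 < r) (hr1 : r < 1)
    (h : ∀ t > 0, μ {x | t < d x} ≤ μ {x | t / r < d x}) {t : ℝ} (ht : 0 < t) :
    μ {x | t < d x} = 0 := by
  have hiter : ∀ n : ℕ, μ {x | t < d x} ≤ μ {x | t / r ^ n < d x} := by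
    intro n
    induction n with
    | zero => simp
    | succ n ih =>
      refine ih.trans ?_
      simpa only [div_div, ← pow_succ] using h (t / r ^ n) (by positivity)
  have hempty : ⋂ s : ℝ, {x | s < d x} = ∅ :=
    eq_empty_of_forall_notMem fun x hx => lt_irrefl (d x) (mem_iInter.1 hx (d x))
  have htail := tendsto_measure_iInter_atTop (μ := μ) (s := fun s : ℝ => {x | s < d x})
    (fun _ => (measurableSet_lt measurable_const hd).nullMeasurableSet)
    (fun _ _ hss' _ hx => hss'.trans_lt hx) ⟨0, measure_ne_top μ _⟩
  rw [hempty, measure_empty] at htail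
  have hgrow : Tendsto (fun n : ℕ => t / r ^ n) atTop atTop := by
    simp_rw [div_eq_mul_inv, ← inv_pow]
    exact (tendsto_pow_atTop_atTop_of_one_lt (one_lt_inv_iff₀.2 ⟨hr0, hr1⟩)).const_mul_atTop ht
  exact le_antisymm (ge_of_tendsto' (htail.comp hgrow) hiter) zero_le

lemma measure_pos_eq_zero_of_le_measure_div_lt {α : Type*} [MeasurableSpace α] {μ : Measure α}
    [IsFiniteMeasure μ] {d : α → ℝ} (hd : Measurable d) {r : ℝ} (hr0 : 0 < r) (hr1 : r < 1)
    (h : ∀ t > 0, μ {x | t < d x} ≤ μ {x | t / r < d x}) :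
    μ {x | 0 < d x} = 0 := by
  have hcover : {x | 0 < d x} ⊆ ⋃ n : ℕ, {x | r ^ n < d x} := fun x hx =>
    mem_iUnion.2 (exists_pow_lt_of_lt_one hx hr1)
  exact measure_mono_null hcover <| measure_iUnion_null fun n =>
    measure_lt_eq_zero_of_le_measure_div_lt hd hr0 hr1 h (pow_pos hr0 n)

lemma Smap_apply_zero (r x : ℝ) : Smap r 0 x = r * x := by simp [Smap]

lemma Smap_apply_one (r x : ℝ) : Smap r 1 x = r * x + (1 - r) / 2 := by
  simp only [Smap, Fin.isValue, Fin.coe_ofNat_eq_mod, Nat.one_mod, Nat.cast_one]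
  ring

lemma Smap_apply_two (r x : ℝ) : Smap r 2 x = r * x + (1 - r) := by
  simp [Smap]

lemma continuous_Smap (r : ℝ) (j : Fin 3) : Continuous (Smap r j) := by
  unfold Smap; fun_prop

lemma max_neg_Smap_sub_one_le {r : ℝ} (hr0 : 0 ≤ r) (hr1 : r ≤ 1) (j : Fin 3) (x : ℝ) :
    max (-Smap r j x) (Smap r j x - 1) ≤ r * max (-x) (x - 1) := by
  have hj : (j : ℝ) ≤ 2 := by exact_mod_cast Nat.le_of_lt_succ j.is_lt
  have hneg : r * -x ≤ r * max (-x) (x - 1) := mul_le_mul_of_nonneg_left (le_max_left _ _) hr0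
  have hsub : r * (x - 1) ≤ r * max (-x) (x - 1) :=
    mul_le_mul_of_nonneg_left (le_max_right _ _) hr0
  unfold Smap
  refine max_le ?_ ?_ <;> nlinarith [(Nat.cast_nonneg j : (0 : ℝ) ≤ j)]

lemma integral_mul_add_const {μ : Measure ℝ} [IsProbabilityMeasure μ]
    (h : Integrable (fun x => x) μ) (a c : ℝ) :
    ∫ x, (a * x + c) ∂μ = a * ∫ x, x ∂μ + c := by
  rw [integral_add (h.const_mul a) (integrable_const c), integral_const_mul, integral_const]
  simp

lemma integral_mul_add_const_sq {μ : Measure ℝ} [IsProbabilityMeasure μ]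
    (h1 : Integrable (fun x => x) μ) (h2 : Integrable (fun x => x ^ 2) μ) (a c : ℝ) :
    ∫ x, (a * x + c) ^ 2 ∂μ = a ^ 2 * ∫ x, x ^ 2 ∂μ + 2 * a * c * ∫ x, x ∂μ + c ^ 2 := by
  have hexp : ∀ x, (a * x + c) ^ 2 = a ^ 2 * x ^ 2 + 2 * a * c * x + c ^ 2 := fun x => by ring
  simp_rw [hexp]
  have h12 : Integrable (fun x => a ^ 2 * x ^ 2 + 2 * a * c * x) μ :=
    (h2.const_mul _).add (h1.const_mul _)
  rw [integral_add h12 (integrable_const _),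
    integral_add (h2.const_mul _) (h1.const_mul _), integral_const_mul, integral_const_mul,
    integral_const]
  simp

def IsSmapInvariant (r : ℝ) (P : Measure ℝ) : Prop :=
  P = (3 : ℝ≥0∞)⁻¹ • (P.map (Smap r 0) + P.map (Smap r 1) + P.map (Smap r 2))

namespace IsSmapInvariant

variable {r : ℝ} {P : Measure ℝ}

lemma measure_le_of_preimage_subset (hP : IsSmapInvariant r P) {A B : Set ℝ}
    (hA : MeasurableSet A) (hAB : ∀ j, Smap r j ⁻¹' A ⊆ B) : P A ≤ P B := by
  have hterm : ∀ j, P.map (Smap r j) A ≤ P B := fun j => by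
    rw [Measure.map_apply (continuous_Smap r j).measurable hA]
    exact measure_mono (hAB j)
  calc P A = 3⁻¹ * (P.map (Smap r 0) A + P.map (Smap r 1) A + P.map (Smap r 2) A) := by
        conv_lhs => rw [hP]
        rfl
    _ ≤ 3⁻¹ * (P B + P B + P B) := by gcongr 3⁻¹ * (?_ + ?_ + ?_) <;> exact hterm _
    _ = P B := by
        rw [show P B + P B + P B = 3 * P B by ring, ← mul_assoc,
          ENNReal.inv_mul_cancel three_ne_zero ENNReal.ofNat_ne_top, one_mul]

section Finite

variable [IsFiniteMeasure P]

lemma ae_mem_Icc (hP : IsSmapInvariant r P) (hr0 : 0 < r) (hr1 : r < 1) :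
    ∀ᵐ x ∂P, x ∈ Icc (0 : ℝ) 1 := by
  -- `max (-x) (x - 1)` is positive exactly off `[0, 1]`, and every `Smap r j` shrinks it by `r`
  have hd : Measurable fun x : ℝ => max (-x) (x - 1) := by fun_prop
  have hnull := measure_pos_eq_zero_of_le_measure_div_lt hd hr0 hr1 fun t _ =>
    hP.measure_le_of_preimage_subset (measurableSet_lt measurable_const hd) fun j x hx =>
      (div_lt_iff₀' hr0).2 (hx.trans_le (max_neg_Smap_sub_one_le hr0.le hr1.le j x))
  refine measure_mono_null (fun x hx => ?_) hnull
  show 0 < max (-x) (x - 1)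
  by_contra! hle
  exact hx ⟨by linarith [le_max_left (-x) (x - 1)], by linarith [le_max_right (-x) (x - 1)]⟩

lemma integrable_of_continuous (hP : IsSmapInvariant r P) (hr0 : 0 < r) (hr1 : r < 1)
    {f : ℝ → ℝ} (hf : Continuous f) : Integrable f P := by
  rw [← Measure.restrict_eq_self_of_ae_mem (hP.ae_mem_Icc hr0 hr1)]
  exact hf.continuousOn.integrableOn_compact isCompact_Icc

lemma integral_eq (hP : IsSmapInvariant r P) (hr0 : 0 < r) (hr1 : r < 1)
    {f : ℝ → ℝ} (hf : Continuous f) :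
    ∫ x, f x ∂P = (∫ x, f (Smap r 0 x) ∂P + ∫ x, f (Smap r 1 x) ∂P
      + ∫ x, f (Smap r 2 x) ∂P) / 3 := by
  have hint : ∀ j, Integrable f (P.map (Smap r j)) := fun j =>
    (integrable_map_measure hf.aestronglyMeasurable
      (continuous_Smap r j).aemeasurable).2
      (hP.integrable_of_continuous hr0 hr1 (hf.comp (continuous_Smap r j)))
  have hmap : ∀ j, ∫ x, f x ∂P.map (Smap r j) = ∫ x, f (Smap r j x) ∂P := fun j =>
    integral_map (continuous_Smap r j).aemeasurable hf.aestronglyMeasurable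
  conv_lhs => rw [hP]
  rw [integral_smul_measure, integral_add_measure ((hint 0).add_measure (hint 1)) (hint 2),
    integral_add_measure (hint 0) (hint 1), hmap, hmap, hmap]
  norm_num
  ring

end Finite

variable [IsProbabilityMeasure P]

lemma integral_id (hP : IsSmapInvariant r P) (hr0 : 0 < r) (hr1 : r < 1) :
    ∫ x, x ∂P = 1 / 2 := by
  have h := hP.integral_eq hr0 hr1 continuous_id
  simp only [id, Smap_apply_zero, Smap_apply_one, Smap_apply_two] at h
  have hint := hP.integrable_of_continuous hr0 hr1 continuous_id
  rw [integral_const_mul, integral_mul_add_const hint, integral_mul_add_const hint] at h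
  have hr : 1 - r ≠ 0 := by linarith
  apply mul_left_cancel₀ hr
  linear_combination h

lemma integral_sq (hP : IsSmapInvariant r P) (hr0 : 0 < r) (hr1 : r < 1) :
    ∫ x, x ^ 2 ∂P = (r + 5) / (12 * (1 + r)) := by
  have h := hP.integral_eq hr0 hr1 (continuous_pow 2)
  simp only [Smap_apply_zero, Smap_apply_one, Smap_apply_two, mul_pow] at h
  have hint1 := hP.integrable_of_continuous hr0 hr1 continuous_id
  have hint2 := hP.integrable_of_continuous hr0 hr1 (continuous_pow 2)
  rw [integral_const_mul, integral_mul_add_const_sq hint1 hint2,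
    integral_mul_add_const_sq hint1 hint2, hP.integral_id hr0 hr1] at h
  have hr : (1 - r) * (1 + r) ≠ 0 := mul_ne_zero (by linarith) (by linarith)
  rw [eq_div_iff (by linarith)]
  apply mul_left_cancel₀ hr
  linear_combination 12 * (1 + r) * h

lemma integral_abs_sub_half (hP : IsSmapInvariant r P) (hr0 : 0 < r) (hr : r ≤ 1 / 2) :
    ∫ x, |x - 1 / 2| ∂P = (1 - r) / (3 - r) := by
  have hr1 : r < 1 := by linarith
  have h := hP.integral_eq hr0 hr1 (f := fun x => |x - 1 / 2|) (by fun_prop)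
  have hmid : ∀ x, |Smap r 1 x - 1 / 2| = r * |x - 1 / 2| := fun x => by
    rw [Smap_apply_one, show r * x + (1 - r) / 2 - 1 / 2 = r * (x - 1 / 2) by ring, abs_mul,
      abs_of_pos hr0]
  -- on `[0, 1]` the outer maps land on opposite sides of `1/2`,
  -- so their two deviations sum to a constant
  have houter : ∀ᵐ x ∂P, |Smap r 0 x - 1 / 2| + |Smap r 2 x - 1 / 2| = 1 - r := by
    filter_upwards [hP.ae_mem_Icc hr0 hr1] with x ⟨hx0, hx1⟩
    rw [Smap_apply_zero, Smap_apply_two, abs_of_nonpos (by nlinarith),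
      abs_of_nonneg (by nlinarith)]
    ring
  have hint : ∀ j, Integrable (fun x => |Smap r j x - 1 / 2|) P := fun j =>
    hP.integrable_of_continuous hr0 hr1 (by have := continuous_Smap r j; fun_prop)
  have hsum : ∫ x, |Smap r 0 x - 1 / 2| ∂P + ∫ x, |Smap r 2 x - 1 / 2| ∂P = 1 - r := by
    rw [← integral_add (hint 0) (hint 2), integral_congr_ae houter]
    simp
  simp only [hmid, integral_const_mul] at h
  rw [eq_div_iff (by linarith)]
  linear_combination 3 * h + hsum

end IsSmapInvariant

lemma min_sq_sub_sq {a b : ℝ} (hab : a ≤ b) (x : ℝ) :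
    min ((x - a) ^ 2) ((x - b) ^ 2)
      = x ^ 2 - (a + b) * x + (a ^ 2 + b ^ 2) / 2 - (b - a) * |x - (a + b) / 2| := by
  rw [show min ((x - a) ^ 2) ((x - b) ^ 2) = (x - a) ^ 2 ⊓ (x - b) ^ 2 from rfl,
    inf_eq_half_smul_add_sub_abs_sub' ℝ,
    show (x - b) ^ 2 - (x - a) ^ 2 = -(2 * (b - a) * (x - (a + b) / 2)) by ring, abs_neg,
    abs_mul, abs_of_nonneg (by linarith : 0 ≤ 2 * (b - a)), smul_eq_mul]
  ring

lemma integral_min_sq_sub_sq {μ : Measure ℝ} [IsProbabilityMeasure μ] {a b : ℝ} (hab : a ≤ b)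
    (h1 : Integrable (fun x => x) μ) (h2 : Integrable (fun x => x ^ 2) μ)
    (habs : Integrable (fun x => |x - (a + b) / 2|) μ) :
    ∫ x, min ((x - a) ^ 2) ((x - b) ^ 2) ∂μ
      = ∫ x, x ^ 2 ∂μ - (a + b) * ∫ x, x ∂μ + (a ^ 2 + b ^ 2) / 2
        - (b - a) * ∫ x, |x - (a + b) / 2| ∂μ := by
  have h12 : Integrable (fun x => x ^ 2 - (a + b) * x) μ := h2.sub (h1.const_mul _)
  have hquad : Integrable (fun x => x ^ 2 - (a + b) * x + (a ^ 2 + b ^ 2) / 2) μ :=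
    h12.add (integrable_const _)
  simp_rw [min_sq_sub_sq hab]
  rw [integral_sub hquad (habs.const_mul _),
    integral_add h12 (integrable_const _), integral_sub h2 (h1.const_mul _), integral_const_mul,
    integral_const_mul, integral_const]
  simp

theorem stmt_6 (r : ℝ) (hr0 : 0 < r) (hr1 : r < 1/3)
    (P : Measure ℝ) [IsProbabilityMeasure P]
    (hP : P = (3 : ℝ≥0∞)⁻¹ •
      (P.map (Smap r 0) + P.map (Smap r 1) + P.map (Smap r 2))) :
    ∫ x, min ((x - (r + 1) / (6 - 2*r))^2) ((x - (5 - 3*r) / (6 - 2*r))^2) ∂P =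
      (-7*r^3 + 13*r^2 - 9*r + 3) / (6 * (r - 3)^2 * (r + 1)) := by
  have hinv : IsSmapInvariant r P := hP
  have hr : r < 1 := by linarith
  have hden : 0 < 6 - 2 * r := by linarith
  have hab : (r + 1) / (6 - 2 * r) ≤ (5 - 3 * r) / (6 - 2 * r) :=
    div_le_div_of_nonneg_right (by linarith) hden.le
  have hmid : (r + 1) / (6 - 2 * r) + (5 - 3 * r) / (6 - 2 * r) = 1 := by
    rw [← add_div, div_eq_one_iff_eq hden.ne']
    ring
  rw [integral_min_sq_sub_sq hab (hinv.integrable_of_continuous hr0 hr continuous_id)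
      (hinv.integrable_of_continuous hr0 hr (continuous_pow 2))
      (hinv.integrable_of_continuous hr0 hr (by fun_prop)),
    hmid, hinv.integral_id hr0 hr, hinv.integral_sq hr0 hr,
    hinv.integral_abs_sub_half hr0 (by linarith)]
  rw [show 6 - 2 * r = 2 * (3 - r) by ring]
  have h3 : 3 - r ≠ 0 := by linarith
  have h3' : r - 3 ≠ 0 := by linarith
  have h1 : 1 + r ≠ 0 := by linarith
  field_simp
  ring
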